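/- Let A be a sign sequence (list over {-1,+1}) and suppose every consecutive subsequence (contiguous sublist) has sum at most n and at least -m, where the number of +1 entries in A equals n and the number of -1 entries equals m, and additionally A contains a contiguous sublist with sum exactly n and a contiguous sublist with sum exactly -m. If n, m ≥ 1, then A is either (the list of n copies of +1 followed by m copies of -1) or (m copies of -1 followed by n copies of +1). -/
import Mathlib

lemma sign_sum_count (l : List ℤ) (h : ∀ x ∈ l, x = 1 ∨ x = -1) :
    l.sum = (l.count 1 : ℤ) - (l.count (-1) : ℤ) := by
  induction l with
  | nil => simp
  | cons a t ih =>
    have ih' := ih (fun x hx => h x (by simp [hx]))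
    rcases h a (by simp) with rfl | rfl <;>
      simp [List.count_cons, ih'] <;> ring

lemma sign_len_count (l : List ℤ) (h : ∀ x ∈ l, x = 1 ∨ x = -1) :
    l.length = l.count 1 + l.count (-1) := by
  induction l with
  | nil => simp
  | cons a t ih =>
    have ih' := ih (fun x hx => h x (by simp [hx]))
    rcases h a (by simp) with rfl | rfl <;>
      simp [List.count_cons, ih'] <;> omega

lemma sign_repl_one (l : List ℤ) (h : ∀ x ∈ l, x = 1 ∨ x = -1)
    (hc : l.count (-1) = 0) : l = List.replicate (l.count 1) 1 := by
  rw [List.eq_replicate_iff]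
  constructor
  · have := sign_len_count l h; omega
  · intro b hb
    rcases h b hb with rfl | rfl
    · rfl
    · exact absurd hc (by simp [List.count_eq_zero]; exact hb)

lemma sign_repl_neg (l : List ℤ) (h : ∀ x ∈ l, x = 1 ∨ x = -1)
    (hc : l.count 1 = 0) : l = List.replicate (l.count (-1)) (-1) := by
  rw [List.eq_replicate_iff]
  constructor
  · have := sign_len_count l h; omega
  · intro b hb
    rcases h b hb with rfl | rfl
    · exact absurd hc (by simp [List.count_eq_zero]; exact hb)
    · rfl

/-- If every contiguous sublist of a sign sequence `A` has sum at most `n` and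
at least `-m`, where `n` and `m` are the numbers of `+1` and `-1` entries of
`A`, and both extremes are attained by contiguous sublists, then `A` is
`(+1,…,+1,-1,…,-1)` or `(-1,…,-1,+1,…,+1)`. -/
theorem stmt4 (A : List ℤ) (hsign : ∀ x ∈ A, x = 1 ∨ x = -1)
    (n m : ℕ) (hn : A.count 1 = n) (hm : A.count (-1) = m)
    (hn1 : 1 ≤ n) (hm1 : 1 ≤ m)
    (hbound : ∀ l : List ℤ, l <:+: A → l.sum ≤ (n : ℤ) ∧ -(m : ℤ) ≤ l.sum)
    (hmax : ∃ l : List ℤ, l <:+: A ∧ l.sum = (n : ℤ))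
    (hmin : ∃ l : List ℤ, l <:+: A ∧ l.sum = -(m : ℤ)) :
    A = List.replicate n (1 : ℤ) ++ List.replicate m (-1) ∨
      A = List.replicate m (-1 : ℤ) ++ List.replicate n 1 := by
  obtain ⟨p, hpA, hps⟩ := hmax
  obtain ⟨q, hqA, hqs⟩ := hmin
  have hpsign : ∀ x ∈ p, x = 1 ∨ x = -1 := fun x hx => hsign x (hpA.sublist.mem hx)
  have hqsign : ∀ x ∈ q, x = 1 ∨ x = -1 := fun x hx => hsign x (hqA.sublist.mem hx)
  have hp1 : p.count 1 ≤ n := hn ▸ hpA.sublist.count_le 1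
  have hpsum := sign_sum_count p hpsign
  have hpc1 : p.count 1 = n ∧ p.count (-1) = 0 := by rw [hps] at hpsum; omega
  have hpe : p = List.replicate n 1 := by
    have := sign_repl_one p hpsign hpc1.2
    rwa [hpc1.1] at this
  have hq1 : q.count (-1) ≤ m := hm ▸ hqA.sublist.count_le (-1)
  have hqsum := sign_sum_count q hqsign
  have hqc1 : q.count (-1) = m ∧ q.count 1 = 0 := by rw [hqs] at hqsum; omega
  have hqe : q = List.replicate m (-1) := by
    have := sign_repl_neg q hqsign hqc1.2
    rwa [hqc1.1] at this
  subst hpe hqe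
  obtain ⟨u, v, huv⟩ := hpA
  have husign : ∀ x ∈ u, x = 1 ∨ x = -1 := fun x hx => hsign x (by rw [← huv]; simp [hx])
  have hvsign : ∀ x ∈ v, x = 1 ∨ x = -1 := fun x hx => hsign x (by rw [← huv]; simp [hx])
  have hc1 : u.count 1 + n + v.count 1 = n := by
    have h1 : (u ++ List.replicate n 1 ++ v).count 1 = n := by rw [huv, hn]
    simp [List.count_append, List.count_replicate] at h1; omega
  have hc2 : u.count (-1) + v.count (-1) = m := by
    have h1 : (u ++ List.replicate n 1 ++ v).count (-1) = m := by rw [huv, hm]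
    simp [List.count_append, List.count_replicate] at h1; omega
  have hu1 : u.count 1 = 0 := by omega
  have hv1 : v.count 1 = 0 := by omega
  obtain ⟨a, hue⟩ : ∃ a, u = List.replicate a (-1) := ⟨_, sign_repl_neg u husign hu1⟩
  obtain ⟨b, hve⟩ : ∃ b, v = List.replicate b (-1) := ⟨_, sign_repl_neg v hvsign hv1⟩
  have hab : a + b = m := by
    have := hc2
    rw [hue, hve] at this
    simpa using this
  rcases Nat.eq_zero_or_pos a with ha0 | hapos
  · left
    rw [← huv, hue, hve, ha0]
    have : b = m := by omega
    simp [this]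
  · right
    obtain ⟨u', v', huv'⟩ := hqA
    have hu'sign : ∀ x ∈ u', x = 1 ∨ x = -1 := fun x hx => hsign x (by rw [← huv']; simp [hx])
    have hv'sign : ∀ x ∈ v', x = 1 ∨ x = -1 := fun x hx => hsign x (by rw [← huv']; simp [hx])
    have hc1' : u'.count (-1) + m + v'.count (-1) = m := by
      have h1 : (u' ++ List.replicate m (-1) ++ v').count (-1) = m := by rw [huv', hm]
      simp [List.count_append, List.count_replicate] at h1; omega
    have hc2' : u'.count 1 + v'.count 1 = n := by
      have h1 : (u' ++ List.replicate m (-1) ++ v').count 1 = n := by rw [huv', hn]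
      simp [List.count_append, List.count_replicate] at h1; omega
    have hu'1 : u'.count (-1) = 0 := by omega
    have hv'1 : v'.count (-1) = 0 := by omega
    obtain ⟨c, hu'e⟩ : ∃ c, u' = List.replicate c 1 := ⟨_, sign_repl_one u' hu'sign hu'1⟩
    obtain ⟨d, hv'e⟩ : ∃ d, v' = List.replicate d 1 := ⟨_, sign_repl_one v' hv'sign hv'1⟩
    have hcd : c + d = n := by
      have := hc2'
      rw [hu'e, hv'e] at this
      simpa using this
    have hheadneg : A.head? = some (-1) := by
      rw [← huv, hue]
      obtain ⟨a', rfl⟩ : ∃ a', a = a' + 1 := ⟨a - 1, by omega⟩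
      simp [List.replicate_succ]
    have hc0 : c = 0 := by
      by_contra hc0
      have hh : A.head? = some 1 := by
        rw [← huv', hu'e]
        obtain ⟨c', rfl⟩ : ∃ c', c = c' + 1 := ⟨c - 1, by omega⟩
        simp [List.replicate_succ]
      rw [hheadneg] at hh
      simp at hh
    rw [← huv', hu'e, hv'e, hc0]
    have : d = n := by omega
    simp [this]
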